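/- arXiv:2010.02425 — 3 statements merged into one kernel-verified Lean document; each statement's English description precedes it below -/
import Mathlib

section
/- For all 0 < ε ≤ 1, the set T¹_{d,b} of separable probability tensors (outer products of d probability vectors in Δ_b) admits an ε-cover in ℓ¹-norm of cardinality at most (2bd/ε)^{bd}. -/
/-! Round each factor `p_i` to a probability vector with entries in `(1/m)ℕ`: floor every
coordinate but the first one, which absorbs the deficit, so the rounding costs at most `2(b-1)/m`
in `ℓ¹`. For probability vectors the `ℓ¹` distance of outer products is at most the sum of the
`ℓ¹` distances of the factors (peel off one factor at a time), so the `(m+1)^{bd}` grid tensors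
form a `2(b-1)d/m`-cover; `m ≈ 2(b-1)d/ε` gives the bound. -/

open Finset

/-- `p` is a probability vector: nonnegative entries summing to 1. -/
def IsProbVec {b : ℕ} (p : Fin b → ℝ) : Prop :=
  (∀ i, 0 ≤ p i) ∧ ∑ i, p i = 1

/-- Separable probability tensors: outer products of `d` probability vectors in `Δ_b`. -/
def SepTensors (d b : ℕ) : Set ((Fin d → Fin b) → ℝ) :=
  {T | ∃ p : Fin d → Fin b → ℝ, (∀ i, IsProbVec (p i)) ∧
    T = fun A => ∏ i, p i (A i)}

namespace IsProbVec

lemma le_one {b : ℕ} {p : Fin b → ℝ} (hp : IsProbVec p) (j : Fin b) : p j ≤ 1 :=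
  hp.2 ▸ single_le_sum (fun i _ => hp.1 i) (mem_univ j)

variable {c : ℕ} {p : Fin (c + 1) → ℝ} {ν : Fin c → ℝ}

lemma cons_one_sub_sum (hp : IsProbVec p) (hν0 : ∀ i, 0 ≤ ν i) (hνp : ∀ i, ν i ≤ p i.succ) :
    IsProbVec (Fin.cons (1 - ∑ i, ν i) ν : Fin (c + 1) → ℝ) := by
  refine ⟨Fin.cases ?_ (by simpa using hν0), by simp [Fin.sum_univ_succ]⟩
  have hsum := hp.2
  rw [Fin.sum_univ_succ] at hsum
  have hνsum := sum_le_sum fun i (_ : i ∈ univ) => hνp i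
  simp only [Fin.cons_zero]
  linarith [hp.1 0]

lemma sum_abs_sub_cons_le (hp : IsProbVec p) (hνp : ∀ i, ν i ≤ p i.succ) {δ : ℝ}
    (hδ : ∀ i, p i.succ - ν i ≤ δ) :
    ∑ j, |p j - (Fin.cons (1 - ∑ i, ν i) ν : Fin (c + 1) → ℝ) j| ≤ 2 * c * δ := by
  have hnn : ∀ i, 0 ≤ p i.succ - ν i := fun i => sub_nonneg.2 (hνp i)
  have hfirst : p 0 - (1 - ∑ i, ν i) = -∑ i, (p i.succ - ν i) := by
    have hsum := hp.2
    rw [Fin.sum_univ_succ] at hsum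
    rw [sum_sub_distrib]
    linarith
  rw [Fin.sum_univ_succ]
  simp only [Fin.cons_zero, Fin.cons_succ, hfirst, abs_neg, abs_of_nonneg (hnn _),
    abs_of_nonneg (sum_nonneg fun i _ => hnn i)]
  calc ∑ i, (p i.succ - ν i) + ∑ i, (p i.succ - ν i) ≤ ∑ _i : Fin c, δ + ∑ _i : Fin c, δ :=
        add_le_add (sum_le_sum fun i _ => hδ i) (sum_le_sum fun i _ => hδ i)
    _ = 2 * c * δ := by simp only [sum_const, card_univ, Fintype.card_fin, nsmul_eq_mul]; ring

end IsProbVec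

lemma natFloor_mul_div_le {x : ℝ} (hx : 0 ≤ x) {m : ℕ} (hm : 0 < m) :
    (⌊x * m⌋₊ : ℝ) / m ≤ x := by
  rw [div_le_iff₀ (by exact_mod_cast hm)]
  exact Nat.floor_le (by positivity)

lemma sub_le_natFloor_mul_div (x : ℝ) {m : ℕ} (hm : 0 < m) :
    x - 1 / m ≤ (⌊x * m⌋₊ : ℝ) / m := by
  have := Nat.lt_floor_add_one (x * m)
  rw [sub_le_iff_le_add, ← add_div, le_div_iff₀ (by exact_mod_cast hm)]
  linarith

open Classical in
noncomputable def simplexGrid (b m : ℕ) : Finset (Fin b → ℝ) :=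
  ((Fintype.piFinset fun _ : Fin b => range (m + 1)).image fun g j => (g j : ℝ) / m).filter
    IsProbVec

lemma isProbVec_of_mem_simplexGrid {b m : ℕ} {q : Fin b → ℝ} (hq : q ∈ simplexGrid b m) :
    IsProbVec q := by
  classical
  rw [simplexGrid, mem_filter] at hq
  exact hq.2

lemma card_simplexGrid_le (b m : ℕ) : (simplexGrid b m).card ≤ (m + 1) ^ b := by
  classical
  exact (card_filter_le _ _).trans <| card_image_le.trans <| by simp

lemma mem_simplexGrid {b m : ℕ} (hm : 0 < m) {q : Fin b → ℝ} (hq : IsProbVec q)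
    (hgrid : ∀ j, ∃ n : ℕ, q j = n / m) : q ∈ simplexGrid b m := by
  classical
  choose n hn using hgrid
  have hnm : ∀ j, n j < m + 1 := fun j => by
    have := hn j ▸ hq.le_one j
    rw [div_le_one (by exact_mod_cast hm)] at this
    exact Nat.lt_succ_of_le (by exact_mod_cast this)
  rw [simplexGrid, mem_filter, mem_image]
  exact ⟨⟨n, Fintype.mem_piFinset.2 fun j => mem_range.2 (hnm j), funext fun j => (hn j).symm⟩, hq⟩

lemma exists_mem_simplexGrid_sum_abs_sub_le {c m : ℕ} (hm : 0 < m) {p : Fin (c + 1) → ℝ}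
    (hp : IsProbVec p) : ∃ q ∈ simplexGrid (c + 1) m, ∑ j, |p j - q j| ≤ 2 * c / m := by
  set k : Fin c → ℕ := fun i => ⌊p i.succ * m⌋₊
  set ν : Fin c → ℝ := fun i => k i / m
  have hmR : (0 : ℝ) < m := by exact_mod_cast hm
  have hνp : ∀ i, ν i ≤ p i.succ := fun i => natFloor_mul_div_le (hp.1 _) hm
  have hq := hp.cons_one_sub_sum (fun i => by positivity) hνp
  have hsumν : ∑ i, ν i = (∑ i, k i : ℕ) / m := by push_cast; exact (sum_div _ _ _).symm
  have hk : ∑ i, k i ≤ m := by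
    have := hq.1 0
    rw [Fin.cons_zero, hsumν, sub_nonneg, div_le_one hmR] at this
    exact_mod_cast this
  have hfirst : 1 - ∑ i, ν i = (m - ∑ i, k i : ℕ) / m := by
    rw [hsumν, Nat.cast_sub hk]
    field_simp
  refine ⟨_, mem_simplexGrid hm hq (Fin.cases ⟨_, hfirst⟩ fun i => ⟨k i, rfl⟩), ?_⟩
  have := hp.sum_abs_sub_cons_le hνp (δ := 1 / m) fun i => by
    linarith [sub_le_natFloor_mul_div (p i.succ) hm]
  rwa [mul_one_div] at this

lemma abs_mul_sub_mul_le {a b x y : ℝ} (ha : 0 ≤ a) (hy : 0 ≤ y) :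
    |a * x - b * y| ≤ a * |x - y| + |a - b| * y :=
  calc |a * x - b * y| = |a * (x - y) + (a - b) * y| := by ring_nf
    _ ≤ |a * (x - y)| + |(a - b) * y| := abs_add_le _ _
    _ = a * |x - y| + |a - b| * y := by rw [abs_mul, abs_mul, abs_of_nonneg ha, abs_of_nonneg hy]

lemma sum_prod_eq_one {n b : ℕ} {q : Fin n → Fin b → ℝ} (hq : ∀ i, IsProbVec (q i)) :
    ∑ A : Fin n → Fin b, ∏ i, q i (A i) = 1 := by
  rw [← Fintype.prod_sum]
  exact prod_eq_one fun i _ => (hq i).2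

lemma sum_fin_succ_pi {n : ℕ} {β M : Type*} [Fintype β] [AddCommMonoid M]
    (f : (Fin (n + 1) → β) → M) :
    ∑ A, f A = ∑ x, ∑ B : Fin n → β, f (Fin.cons x B) := by
  rw [← (Fin.consEquiv fun _ => β).sum_comp, Fintype.sum_prod_type]
  rfl

theorem sum_abs_prod_sub_prod_le {b : ℕ} : ∀ {n : ℕ} {p q : Fin n → Fin b → ℝ},
    (∀ i, IsProbVec (p i)) → (∀ i, IsProbVec (q i)) →
    ∑ A : Fin n → Fin b, |∏ i, p i (A i) - ∏ i, q i (A i)| ≤ ∑ i, ∑ j, |p i j - q i j|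
  | 0, _, _, _, _ => by simp
  | n + 1, p, q, hp, hq => by
    set P : (Fin n → Fin b) → ℝ := fun B => ∏ i, p i.succ (B i)
    set Q : (Fin n → Fin b) → ℝ := fun B => ∏ i, q i.succ (B i)
    have ih : ∑ B, |P B - Q B| ≤ ∑ i : Fin n, ∑ j, |p i.succ j - q i.succ j| :=
      sum_abs_prod_sub_prod_le (fun i => hp i.succ) (fun i => hq i.succ)
    calc ∑ A : Fin (n + 1) → Fin b, |∏ i, p i (A i) - ∏ i, q i (A i)|
        = ∑ x, ∑ B, |p 0 x * P B - q 0 x * Q B| := by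
          rw [sum_fin_succ_pi]
          simp only [Fin.prod_univ_succ, Fin.cons_zero, Fin.cons_succ, P, Q]
      _ ≤ ∑ x, ∑ B, (p 0 x * |P B - Q B| + |p 0 x - q 0 x| * Q B) := by
          gcongr with x _ B _
          exact abs_mul_sub_mul_le ((hp 0).1 x) (prod_nonneg fun i _ => (hq i.succ).1 _)
      _ = (∑ x, p 0 x) * ∑ B, |P B - Q B| + (∑ x, |p 0 x - q 0 x|) * ∑ B, Q B := by
          simp only [sum_add_distrib, ← mul_sum, ← sum_mul]
      _ ≤ ∑ j, |p 0 j - q 0 j| + ∑ i : Fin n, ∑ j, |p i.succ j - q i.succ j| := by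
          rw [(hp 0).2, sum_prod_eq_one fun i => hq i.succ]
          linarith
      _ = ∑ i, ∑ j, |p i j - q i j| := (Fin.sum_univ_succ (fun i => ∑ j, |p i j - q i j|)).symm

noncomputable def sepTensorGrid (d b m : ℕ) : Finset ((Fin d → Fin b) → ℝ) :=
  (Fintype.piFinset fun _ : Fin d => simplexGrid b m).image fun q A => ∏ i, q i (A i)

section sepTensorGrid

variable {d b m : ℕ}

lemma mem_sepTensors_of_mem_sepTensorGrid {T : (Fin d → Fin b) → ℝ}
    (hT : T ∈ sepTensorGrid d b m) : T ∈ SepTensors d b := by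
  obtain ⟨q, hq, rfl⟩ := mem_image.1 hT
  exact ⟨q, fun i => isProbVec_of_mem_simplexGrid (Fintype.mem_piFinset.1 hq i), rfl⟩

lemma card_sepTensorGrid_le : (sepTensorGrid d b m).card ≤ (m + 1) ^ (b * d) := by
  rw [pow_mul]
  refine card_image_le.trans ?_
  rw [Fintype.card_piFinset, prod_const, card_univ, Fintype.card_fin]
  exact Nat.pow_le_pow_left (card_simplexGrid_le b m) d

lemma exists_mem_sepTensorGrid_sum_abs_sub_le {c : ℕ} (hm : 0 < m) {T : (Fin d → Fin (c + 1)) → ℝ}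
    (hT : T ∈ SepTensors d (c + 1)) :
    ∃ T' ∈ sepTensorGrid d (c + 1) m, ∑ A, |T A - T' A| ≤ 2 * c * d / m := by
  obtain ⟨p, hp, rfl⟩ := hT
  choose q hq hdist using fun i => exists_mem_simplexGrid_sum_abs_sub_le hm (hp i)
  refine ⟨fun A => ∏ i, q i (A i), mem_image_of_mem _ (Fintype.mem_piFinset.2 hq), ?_⟩
  calc ∑ A : Fin d → Fin (c + 1), |∏ i, p i (A i) - ∏ i, q i (A i)|
      ≤ ∑ i, ∑ j, |p i j - q i j| :=
        sum_abs_prod_sub_prod_le hp fun i => isProbVec_of_mem_simplexGrid (hq i)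
    _ ≤ ∑ _i : Fin d, 2 * (c : ℝ) / m := sum_le_sum fun i _ => hdist i
    _ = 2 * c * d / m := by
      simp only [sum_const, card_univ, Fintype.card_fin, nsmul_eq_mul]
      ring

end sepTensorGrid

lemma exists_grid_resolution {c d : ℕ} (hd : 0 < d) {ε : ℝ} (hε : 0 < ε) (hε1 : ε ≤ 1) :
    ∃ m : ℕ, 0 < m ∧ 2 * c * d / m ≤ ε ∧ (m : ℝ) + 1 ≤ 2 * (c + 1) * d / ε := by
  set x : ℝ := 2 * c * d / ε
  have hx : 0 ≤ x := by positivity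
  have hdε : (2 : ℝ) ≤ 2 * d / ε := by
    rw [le_div_iff₀ hε]
    nlinarith [(by exact_mod_cast hd : (1 : ℝ) ≤ d)]
  refine ⟨max 1 ⌈x⌉₊, by positivity, ?_, ?_⟩
  · have hxm : x ≤ (max 1 ⌈x⌉₊ : ℕ) := (Nat.le_ceil x).trans (by exact_mod_cast le_max_right _ _)
    rw [div_le_iff₀ (by positivity)]
    rwa [div_le_iff₀' hε] at hxm
  · have hm : ((max 1 ⌈x⌉₊ : ℕ) : ℝ) ≤ x + 1 := by
      push_cast
      exact max_le (by linarith) (Nat.ceil_lt_add_one hx).le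
    have : 2 * ((c : ℝ) + 1) * d / ε = x + 2 * d / ε := by ring
    linarith

theorem sep_tensor_cover (d b : ℕ) (hd : 0 < d) (hb : 0 < b)
    (ε : ℝ) (hε : 0 < ε) (hε1 : ε ≤ 1) :
    ∃ S : Finset ((Fin d → Fin b) → ℝ),
      (∀ T ∈ S, T ∈ SepTensors d b) ∧
      (S.card : ℝ) ≤ (2 * b * d / ε) ^ (b * d) ∧
      ∀ T ∈ SepTensors d b, ∃ T' ∈ S, ∑ A, |T A - T' A| ≤ ε := by
  obtain ⟨c, rfl⟩ : ∃ c, b = c + 1 := ⟨b - 1, by omega⟩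
  obtain ⟨m, hm, herr, hsize⟩ := exists_grid_resolution (c := c) hd hε hε1
  refine ⟨sepTensorGrid d (c + 1) m, fun T => mem_sepTensors_of_mem_sepTensorGrid, ?_, ?_⟩
  · calc ((sepTensorGrid d (c + 1) m).card : ℝ) ≤ ((m : ℝ) + 1) ^ ((c + 1) * d) := by
          exact_mod_cast card_sepTensorGrid_le
      _ ≤ (2 * ↑(c + 1) * d / ε) ^ ((c + 1) * d) := by
          push_cast
          exact pow_le_pow_left₀ (by positivity) hsize _
  · intro T hT
    obtain ⟨T', hT', hdist⟩ := exists_mem_sepTensorGrid_sum_abs_sub_le hm hT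
    exact ⟨T', hT', hdist.trans herr⟩
end

section
/- For all 0 < ε ≤ 1, the set T̃^k_{d,b} of probability tensors given by a nonnegative Tucker decomposition with core in T_{d,k} and factor vectors in Δ_b admits an ε-cover in ℓ¹-norm of cardinality at most (4bd/ε)^{bdk} · (4k^d/ε)^{k^d}. -/
open Finset

/-- `W` is a probability tensor: nonnegative entries summing to 1. -/
def IsProbTensor {d k : ℕ} (W : (Fin d → Fin k) → ℝ) : Prop :=
  (∀ S, 0 ≤ W S) ∧ ∑ S, W S = 1

/-- Tucker probability tensors: nonnegative Tucker decompositions with core in `T_{d,k}`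
and factor vectors in `Δ_b`. -/
def TuckerTensors (d b k : ℕ) : Set ((Fin d → Fin b) → ℝ) :=
  {T | ∃ W : (Fin d → Fin k) → ℝ, IsProbTensor W ∧ ∃ p : Fin d → Fin k → Fin b → ℝ,
    (∀ i j, IsProbVec (p i j)) ∧
    T = fun A => ∑ S : Fin d → Fin k, W S * ∏ i, p i (S i) (A i)}

/-!
A probability vector on `m` points is `2(m - 1)/N`-close in `ℓ¹` to a point of the grid with
denominator `N` (round every coordinate down, then hand the missing mass out in units of `1/N`),
so the simplex has an `η`-net of size `(2m/η)^m`. The Tucker map is `ℓ¹`-stable: replacing the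
core costs `‖W - W'‖₁`, and replacing the factors costs at most `d · max ‖p - p'‖₁`, by
telescoping the product of the `d` factors and using that `ℓ¹` norms multiply over tensor
products. Nets at scale `ε/2` for the core and `ε/(2d)` for the factors give the cover.
-/

theorem sum_abs_prod_le_one {ι β : Type*} [Fintype ι] [DecidableEq ι] [Fintype β]
    (u : ι → β → ℝ) (hu : ∀ i, ∑ a, |u i a| ≤ 1) :
    ∑ A : ι → β, |∏ i, u i (A i)| ≤ 1 := by
  simp_rw [Finset.abs_prod]
  rw [← Fintype.prod_sum fun i a => |u i a|]
  exact prod_le_one (fun i _ => sum_nonneg fun a _ => abs_nonneg _) fun i _ => hu i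

theorem sum_abs_prod_sub_prod_le_s5 {β : Type*} [Fintype β] :
    ∀ {d : ℕ} (u v : Fin d → β → ℝ), (∀ i, ∑ a, |u i a| ≤ 1) → (∀ i, ∑ a, |v i a| ≤ 1) →
      ∑ A : Fin d → β, |∏ i, u i (A i) - ∏ i, v i (A i)| ≤ ∑ i, ∑ a, |u i a - v i a|
  | 0, _, _, _, _ => by simp
  | d + 1, u, v, hu, hv => by
    have ih := sum_abs_prod_sub_prod_le_s5 (fun i => u i.succ) (fun i => v i.succ)
      (fun i => hu i.succ) (fun i => hv i.succ)
    rw [← (Fin.consEquiv fun _ => β).sum_comp, Fintype.sum_prod_type, Fin.sum_univ_succ]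
    simp only [Fin.consEquiv_apply, Fin.prod_univ_succ, Fin.cons_zero, Fin.cons_succ]
    calc ∑ a, ∑ A : Fin d → β, |u 0 a * ∏ i, u i.succ (A i) - v 0 a * ∏ i, v i.succ (A i)|
        ≤ ∑ a, ∑ A : Fin d → β, (|u 0 a - v 0 a| * |∏ i, u i.succ (A i)|
            + |v 0 a| * |∏ i, u i.succ (A i) - ∏ i, v i.succ (A i)|) := by
          gcongr with a _ A _
          rw [← abs_mul, ← abs_mul]
          exact (abs_add_le _ _).trans_eq' (by ring_nf)
      _ = ∑ a, (|u 0 a - v 0 a| * ∑ A : Fin d → β, |∏ i, u i.succ (A i)|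
            + |v 0 a| * ∑ A : Fin d → β, |∏ i, u i.succ (A i) - ∏ i, v i.succ (A i)|) := by
          simp only [sum_add_distrib, mul_sum]
      _ ≤ ∑ a, (|u 0 a - v 0 a| * 1 + |v 0 a| * ∑ i : Fin d, ∑ a, |u i.succ a - v i.succ a|) := by
          gcongr with a
          exact sum_abs_prod_le_one _ fun i => hu i.succ
      _ ≤ _ := by
          rw [sum_add_distrib, ← sum_mul, ← sum_mul, mul_one]
          gcongr
          exact mul_le_of_le_one_left (sum_nonneg fun _ _ => sum_nonneg fun _ _ => abs_nonneg _)
            (hv 0)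

def tucker {d : ℕ} {κ β : Type*} [Fintype κ] (W : (Fin d → κ) → ℝ) (p : Fin d → κ → β → ℝ) :
    (Fin d → β) → ℝ :=
  fun A => ∑ S, W S * ∏ i, p i (S i) (A i)

theorem sum_abs_tucker_sub_le {d : ℕ} {κ β : Type*} [Fintype κ] [Fintype β]
    (W W' : (Fin d → κ) → ℝ) (p p' : Fin d → κ → β → ℝ)
    (hW'0 : ∀ S, 0 ≤ W' S) (hW'1 : ∑ S, W' S = 1)
    (hp : ∀ i j, ∑ a, |p i j a| ≤ 1) (hp' : ∀ i j, ∑ a, |p' i j a| ≤ 1)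
    {δ : ℝ} (hδ : ∀ i j, ∑ a, |p i j a - p' i j a| ≤ δ) :
    ∑ A, |tucker W p A - tucker W' p' A| ≤ ∑ S, |W S - W' S| + d * δ := by
  classical
  calc ∑ A, |tucker W p A - tucker W' p' A|
      ≤ ∑ A : Fin d → β, ∑ S, (|W S - W' S| * |∏ i, p i (S i) (A i)|
          + W' S * |∏ i, p i (S i) (A i) - ∏ i, p' i (S i) (A i)|) := by
        gcongr with A _
        rw [tucker, tucker, ← sum_sub_distrib]
        refine (abs_sum_le_sum_abs _ _).trans (sum_le_sum fun S _ => ?_)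
        rw [← abs_mul, ← abs_of_nonneg (hW'0 S), ← abs_mul, abs_of_nonneg (hW'0 S)]
        exact (abs_add_le _ _).trans_eq' (by ring_nf)
    _ = ∑ S, (|W S - W' S| * ∑ A : Fin d → β, |∏ i, p i (S i) (A i)|
          + W' S * ∑ A : Fin d → β, |∏ i, p i (S i) (A i) - ∏ i, p' i (S i) (A i)|) := by
        rw [sum_comm]
        simp only [sum_add_distrib, mul_sum]
    _ ≤ ∑ S, (|W S - W' S| * 1 + W' S * (d * δ)) := by
        gcongr with S _
        · exact sum_abs_prod_le_one _ fun i => hp i (S i)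
        · exact hW'0 S
        · calc _ ≤ ∑ i, ∑ a, |p i (S i) a - p' i (S i) a| :=
                sum_abs_prod_sub_prod_le_s5 _ _ (fun i => hp i (S i)) fun i => hp' i (S i)
            _ ≤ ∑ _i : Fin d, δ := sum_le_sum fun i _ => hδ i (S i)
            _ = d * δ := by simp
    _ = ∑ S, |W S - W' S| + d * δ := by
        rw [sum_add_distrib, ← sum_mul, ← sum_mul, hW'1, one_mul, mul_one]

theorem exists_nat_sum_abs_sub_le {ι : Type*} [Fintype ι] [Nonempty ι] (N : ℕ) (x : ι → ℝ)
    (hx0 : ∀ i, 0 ≤ x i) (hx : ∑ i, x i = N) :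
    ∃ n : ι → ℕ, ∑ i, n i = N ∧ ∑ i, |x i - n i| ≤ 2 * (Fintype.card ι - 1) := by
  classical
  -- Round down; the deficit `N - ∑ ⌊x i⌋₊` is below `card ι`, so one unit each to that many
  -- coordinates restores the sum.
  set f : ι → ℕ := fun i => ⌊x i⌋₊
  have hf_le : ∑ i, f i ≤ N := by
    have : ∑ i, (f i : ℝ) ≤ N := hx ▸ sum_le_sum fun i _ => Nat.floor_le (hx0 i)
    exact_mod_cast this
  have hf_gt : N < ∑ i, f i + Fintype.card ι := by
    have : (N : ℝ) < ∑ i, ((f i : ℝ) + 1) :=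
      hx ▸ sum_lt_sum_of_nonempty univ_nonempty fun i _ => Nat.lt_floor_add_one (x i)
    rw [sum_add_distrib, sum_const, card_univ, nsmul_one] at this
    exact_mod_cast this
  obtain ⟨t, -, ht⟩ := exists_subset_card_eq (s := (univ : Finset ι)) (n := N - ∑ i, f i)
    (by rw [card_univ]; omega)
  refine ⟨fun i => f i + if i ∈ t then 1 else 0, ?_, ?_⟩
  · rw [sum_add_distrib, sum_ite_mem, univ_inter, sum_const, ht, smul_eq_mul, mul_one]
    omega
  · calc ∑ i, |x i - ((f i + if i ∈ t then 1 else 0 : ℕ) : ℝ)|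
        ≤ ∑ i, ((x i - f i) + if i ∈ t then 1 else 0) := by
          gcongr with i
          have : (0 : ℝ) ≤ x i - f i := sub_nonneg.2 (Nat.floor_le (hx0 i))
          push_cast
          rw [← sub_sub]
          refine (abs_sub _ _).trans ?_
          split_ifs <;> simp [abs_of_nonneg this]
      _ = 2 * (N - ∑ i, f i : ℕ) := by
          rw [sum_add_distrib, sum_sub_distrib, hx, sum_ite_mem, univ_inter, sum_const, ht,
            nsmul_one, Nat.cast_sub hf_le]
          push_cast
          ring
      _ ≤ 2 * (Fintype.card ι - 1) := by
          have : N - ∑ i, f i + 1 ≤ Fintype.card ι := by omega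
          gcongr
          exact le_sub_iff_add_le.2 (by exact_mod_cast this)

theorem exists_simplex_cover (ι : Type*) [Fintype ι] [Nonempty ι] {η : ℝ} (hη : 0 < η)
    (hη1 : η ≤ 1) :
    ∃ C : Finset (ι → ℝ), (∀ q ∈ C, (∀ i, 0 ≤ q i) ∧ ∑ i, q i = 1) ∧
      (C.card : ℝ) ≤ (2 * Fintype.card ι / η) ^ Fintype.card ι ∧
      ∀ p : ι → ℝ, (∀ i, 0 ≤ p i) → ∑ i, p i = 1 → ∃ q ∈ C, ∑ i, |p i - q i| ≤ η := by
  classical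
  set m := Fintype.card ι
  -- `2(m - 1)/N < η` bounds the rounding error, and `η ≤ 1` gives `N + 1 ≤ 2m/η`.
  set N := ⌊2 * (m - 1) / η⌋₊ + 1
  have hN0 : (0 : ℝ) < N := by positivity
  have hm : (1 : ℝ) ≤ m := by exact_mod_cast Fintype.card_pos
  have hN_gt : 2 * (m - 1) / η < N := by simpa [N] using Nat.lt_floor_add_one (2 * (m - 1) / η)
  have hN_le : (N : ℝ) + 1 ≤ 2 * m / η := by
    have : (N : ℝ) ≤ 2 * (m - 1) / η + 1 := by
      simpa [N] using Nat.floor_le (div_nonneg (by linarith : 0 ≤ 2 * ((m : ℝ) - 1)) hη.le)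
    have : 2 ≤ 2 / η := by rw [le_div_iff₀ hη]; linarith
    calc (N : ℝ) + 1 ≤ 2 * (m - 1) / η + 2 := by linarith
      _ ≤ 2 * (m - 1) / η + 2 / η := by linarith
      _ = 2 * m / η := by ring
  refine ⟨((Fintype.piFinset fun _ : ι => range (N + 1)).filter (fun n => ∑ i, n i = N)).image
    fun n i => (n i : ℝ) / N, ?_, ?_, ?_⟩
  · simp only [forall_mem_image, mem_filter]
    rintro n ⟨-, hn⟩
    refine ⟨fun i => by positivity, ?_⟩
    rw [← sum_div, ← Nat.cast_sum, hn, div_self hN0.ne']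
  · calc (_ : ℝ) ≤ ((N + 1) ^ m : ℕ) := by
          refine Nat.cast_le.2 (card_image_le.trans ((card_filter_le _ _).trans ?_))
          simp [m]
      _ ≤ (2 * m / η) ^ m := by
          push_cast
          gcongr
  · intro p hp0 hp1
    obtain ⟨n, hn, herr⟩ := exists_nat_sum_abs_sub_le N (fun i => N * p i)
      (fun i => mul_nonneg hN0.le (hp0 i)) (by rw [← mul_sum, hp1, mul_one])
    have hnN : ∀ i, n i < N + 1 := fun i =>
      Nat.lt_succ_of_le (hn ▸ single_le_sum (fun j _ => Nat.zero_le (n j)) (mem_univ i))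
    refine ⟨_, mem_image_of_mem _
      (mem_filter.2 ⟨Fintype.mem_piFinset.2 fun i => mem_range.2 (hnN i), hn⟩), ?_⟩
    calc ∑ i, |p i - n i / N| = (∑ i, |N * p i - n i|) / N := by
          rw [sum_div]
          refine sum_congr rfl fun i _ => ?_
          rw [← abs_of_pos hN0, ← abs_div, abs_of_pos hN0]
          congr 1
          field_simp
      _ ≤ 2 * (m - 1) / N := by gcongr
      _ ≤ η := by rw [div_le_iff₀ hN0]; rw [div_lt_iff₀ hη] at hN_gt; linarith

theorem tucker_tensor_cover (d b k : ℕ) (hd : 0 < d) (hb : 0 < b) (hk : 0 < k)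
    (ε : ℝ) (hε : 0 < ε) (hε1 : ε ≤ 1) :
    ∃ S : Finset ((Fin d → Fin b) → ℝ),
      (∀ T ∈ S, T ∈ TuckerTensors d b k) ∧
      (S.card : ℝ) ≤ (4 * b * d / ε) ^ (b * d * k) * (4 * k ^ d / ε) ^ (k ^ d) ∧
      ∀ T ∈ TuckerTensors d b k, ∃ T' ∈ S, ∑ A, |T A - T' A| ≤ ε := by
  classical
  have : Nonempty (Fin b) := ⟨⟨0, hb⟩⟩
  have : Nonempty (Fin k) := ⟨⟨0, hk⟩⟩
  have hd1 : (1 : ℝ) ≤ d := by exact_mod_cast hd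
  obtain ⟨CW, hCW, hCW_card, hCW_cover⟩ :=
    exists_simplex_cover (Fin d → Fin k) (half_pos hε) (by linarith)
  obtain ⟨Cp, hCp, hCp_card, hCp_cover⟩ := exists_simplex_cover (Fin b) (η := ε / (2 * d))
    (by positivity) (div_le_one_of_le₀ (by linarith) (by positivity))
  have sum_abs_le_one : ∀ q : Fin b → ℝ, IsProbVec q → ∑ a, |q a| ≤ 1 := fun q hq =>
    (sum_congr rfl fun a _ => abs_of_nonneg (hq.1 a)).trans_le hq.2.le
  refine ⟨(CW ×ˢ Fintype.piFinset fun _ => Fintype.piFinset fun _ => Cp).image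
    fun x => tucker x.1 x.2, ?_, ?_, ?_⟩
  · simp only [forall_mem_image, mem_product, Fintype.mem_piFinset]
    rintro ⟨W, p⟩ ⟨hW, hp⟩
    exact ⟨W, hCW W hW, p, fun i j => hCp _ (hp i j), rfl⟩
  · calc (_ : ℝ) ≤ ((CW ×ˢ Fintype.piFinset fun _ => Fintype.piFinset fun _ => Cp).card : ℝ) :=
          Nat.cast_le.2 card_image_le
      _ = CW.card * ((Cp.card : ℝ) ^ k) ^ d := by simp
      _ ≤ (4 * k ^ d / ε) ^ (k ^ d) * (((4 * b * d / ε) ^ b) ^ k) ^ d := by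
          gcongr
          · refine hCW_card.trans_eq ?_
            rw [Fintype.card_fun, Fintype.card_fin, Fintype.card_fin]
            push_cast
            ring
          · exact hCp_card.trans_eq (by rw [Fintype.card_fin]; field_simp; ring)
      _ = _ := by ring
  · rintro _ ⟨W, hW, p, hp, rfl⟩
    obtain ⟨W', hW', hWW'⟩ := hCW_cover W hW.1 hW.2
    choose p' hp' hpp' using fun i j => hCp_cover (p i j) (hp i j).1 (hp i j).2
    refine ⟨tucker W' p', mem_image.2 ⟨(W', p'), mem_product.2
      ⟨hW', Fintype.mem_piFinset.2 fun i => Fintype.mem_piFinset.2 fun j => hp' i j⟩, rfl⟩, ?_⟩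
    calc _ ≤ ∑ S, |W S - W' S| + d * (ε / (2 * d)) :=
          sum_abs_tucker_sub_le W W' p p' (hCW W' hW').1 (hCW W' hW').2
            (fun i j => sum_abs_le_one _ (hp i j))
            (fun i j => sum_abs_le_one _ (hCp _ (hp' i j))) hpp'
      _ ≤ ε / 2 + d * (ε / (2 * d)) := by gcongr
      _ = ε := by field_simp; ring
end

section
/- If sequences b(n), k(n) → ∞ satisfy n / (b k log b + k log k) → ∞, then there exists a sequence δ(n) → 0 with 0 < δ(n) ≤ 1 such that for all sufficiently large n, log( (4bd/δ)^{bdk} · (4k/δ)^k ) ≤ n. -/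
/-!
Take `δ = 1 / (b + 1)`. Once `b > 4d` and `k ≥ 4`, we have `4bd(b + 1) ≤ b³` and
`4k(b + 1) ≤ (kb)²`, so the covering bound is a natural number at most
`(b ^ (bk) * k ^ k) ^ (3d + 2)`, whose logarithm is `(3d + 2)(bk log b + k log k)`.
This is eventually at most `n` by the rate hypothesis.
-/

open Filter Real

theorem Real.log_natCast_le_log_natCast {m n : ℕ} (h : m ≤ n) : log m ≤ log n := by
  rcases m.eq_zero_or_pos with rfl | hm
  · simpa using log_natCast_nonneg n
  · exact log_le_log (by exact_mod_cast hm) (by exact_mod_cast h)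

theorem four_mul_mul_succ_le_cube {b d : ℕ} (hbd : 4 * d < b) :
    4 * b * d * (b + 1) ≤ b ^ 3 :=
  calc 4 * b * d * (b + 1) = b * (4 * d * (b + 1)) := by ring
    _ ≤ b * (b * b) := Nat.mul_le_mul_left _ (by nlinarith)
    _ = b ^ 3 := by ring

theorem four_mul_succ_le_sq {b k : ℕ} (hb : 2 ≤ b) (hk : 4 ≤ k) :
    4 * k * (b + 1) ≤ (k * b) ^ 2 :=
  calc 4 * k * (b + 1) ≤ (k * k) * (b * b) :=
        Nat.mul_le_mul (Nat.mul_le_mul_right k hk) (by nlinarith)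
    _ = (k * b) ^ 2 := by ring

theorem cover_count_le {b d k : ℕ} (hb : 2 ≤ b) (hbd : 4 * d < b) (hk : 4 ≤ k) :
    (4 * b * d * (b + 1)) ^ (b * d * k) * (4 * k * (b + 1)) ^ k ≤
      (b ^ (b * k) * k ^ k) ^ (3 * d + 2) := by
  have hbk : b ^ k ≤ b ^ (b * k) :=
    Nat.pow_le_pow_right (by omega) (Nat.le_mul_of_pos_left k (by omega))
  have hkk : (k ^ k) ^ 2 ≤ (k ^ k) ^ (3 * d + 2) :=
    Nat.pow_le_pow_right (by positivity) (by omega)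
  calc (4 * b * d * (b + 1)) ^ (b * d * k) * (4 * k * (b + 1)) ^ k
      ≤ (b ^ 3) ^ (b * d * k) * ((k * b) ^ 2) ^ k := by
        gcongr
        · exact four_mul_mul_succ_le_cube hbd
        · exact four_mul_succ_le_sq hb hk
    _ = (b ^ (b * k)) ^ (3 * d) * (b ^ k) ^ 2 * (k ^ k) ^ 2 := by ring
    _ ≤ (b ^ (b * k)) ^ (3 * d) * (b ^ (b * k)) ^ 2 * (k ^ k) ^ (3 * d + 2) := by
        gcongr
    _ = (b ^ (b * k) * k ^ k) ^ (3 * d + 2) := by ring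

theorem log_cover_count_le {b d k : ℕ} (hb : 2 ≤ b) (hbd : 4 * d < b) (hk : 4 ≤ k) :
    log (((4 * b * d * (b + 1)) ^ (b * d * k) * (4 * k * (b + 1)) ^ k : ℕ) : ℝ) ≤
      (3 * d + 2) * ((b : ℝ) * k * log b + (k : ℝ) * log k) := by
  refine (log_natCast_le_log_natCast (cover_count_le hb hbd hk)).trans_eq ?_
  have hb0 : (b : ℝ) ^ (b * k) ≠ 0 := pow_ne_zero _ (by positivity)
  have hk0 : (k : ℝ) ^ k ≠ 0 := pow_ne_zero _ (by positivity)
  push_cast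
  rw [log_pow, log_mul hb0 hk0, log_pow, log_pow]
  push_cast
  ring

theorem mul_mul_log_add_mul_log_pos {b k : ℕ} (hb : 2 ≤ b) (hk : 1 ≤ k) :
    0 < (b : ℝ) * k * log b + k * log k := by
  have hb1 : (1 : ℝ) < b := by exact_mod_cast hb
  have hk0 : (0 : ℝ) < k := by exact_mod_cast hk
  have := mul_pos (mul_pos (zero_lt_one.trans hb1) hk0) (log_pos hb1)
  have := mul_nonneg hk0.le (log_natCast_nonneg k)
  linarith

theorem multiview_cover_log_rate_general (d : ℕ) (b k : ℕ → ℕ)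
    (hb : Tendsto b atTop atTop) (hk : Tendsto k atTop atTop)
    (hrate : Tendsto (fun n : ℕ => (n : ℝ) /
        ((b n : ℝ) * k n * Real.log (b n) + (k n : ℝ) * Real.log (k n))) atTop atTop) :
    ∃ δ : ℕ → ℝ, (∀ n, 0 < δ n ∧ δ n ≤ 1) ∧ Tendsto δ atTop (nhds 0) ∧
      ∀ᶠ n in atTop,
        Real.log ((4 * (b n : ℝ) * d / δ n) ^ (b n * d * k n) *
          (4 * (k n : ℝ) / δ n) ^ (k n)) ≤ n := by
  refine ⟨fun n => 1 / ((b n : ℝ) + 1), fun n => ⟨by positivity, ?_⟩,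
    tendsto_one_div_add_atTop_nhds_zero_nat.comp hb, ?_⟩
  · exact (div_le_one (by positivity)).mpr (by simp)
  filter_upwards [hb.eventually_gt_atTop (4 * d + 1), hk.eventually_ge_atTop 4,
    hrate.eventually_ge_atTop (3 * (d : ℝ) + 2)] with n hbn hkn hrn
  have hdenom := mul_mul_log_add_mul_log_pos (b := b n) (k := k n) (by omega) (by omega)
  calc log ((4 * (b n : ℝ) * d / (1 / ((b n : ℝ) + 1))) ^ (b n * d * k n) *
        (4 * (k n : ℝ) / (1 / ((b n : ℝ) + 1))) ^ (k n))
      = log (((4 * b n * d * (b n + 1)) ^ (b n * d * k n) *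
          (4 * k n * (b n + 1)) ^ k n : ℕ) : ℝ) := by
        simp only [one_div, div_inv_eq_mul]
        push_cast
        ring
    _ ≤ (3 * d + 2) * ((b n : ℝ) * k n * log (b n) + (k n : ℝ) * log (k n)) :=
        log_cover_count_le (by omega) (by omega) hkn
    _ ≤ n := (le_div_iff₀ hdenom).mp hrn

/-- If `b(n), k(n) → ∞` with `n / (b k log b + k log k) → ∞`, then there is a sequence
`δ(n) → 0`, `0 < δ(n) ≤ 1`, with `log((4bd/δ)^{bdk} (4k/δ)^k) ≤ n` eventually. -/
theorem multiview_cover_log_rate (d : ℕ) (hd : 0 < d) (b k : ℕ → ℕ)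
    (hb : Tendsto b atTop atTop) (hk : Tendsto k atTop atTop)
    (hrate : Tendsto (fun n : ℕ => (n : ℝ) /
        ((b n : ℝ) * k n * Real.log (b n) + (k n : ℝ) * Real.log (k n))) atTop atTop) :
    ∃ δ : ℕ → ℝ, (∀ n, 0 < δ n ∧ δ n ≤ 1) ∧ Tendsto δ atTop (nhds 0) ∧
      ∀ᶠ n in atTop,
        Real.log ((4 * (b n : ℝ) * d / δ n) ^ (b n * d * k n) *
          (4 * (k n : ℝ) / δ n) ^ (k n)) ≤ n :=
  multiview_cover_log_rate_general d b k hb hk hrate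
end
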